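/- For all s > 0 and r ≥ 1: q_r(s) e^{-s} ≥ exp(-s^r/r!), where q_r(s) = sum_{i=0}^{r-1} s^i/i!, i.e. -log(q_r(s)e^{-s}) ≤ s^r/r!. -/

import Mathlib

/-! With `r = m + 1` and `g(t) = t^r/r! - t`, the function `q_r(t) e^{g(t)}` equals `1` at `t = 0`
and has derivative `e^{g(t)} (t^m/m!) (q_r(t) - 1) ≥ 0` for `t ≥ 0`, because `q_r' = q_m` and
`q_r ≥ 1` there. Hence `q_r(s) e^{g(s)} ≥ 1`, which is the claim after multiplying by
`e^{-s^r/r!}`. -/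

open Finset

/-- `q_r(s) = ∑_{i=0}^{r-1} s^i/i!`, the truncated exponential series. -/
noncomputable def qrR (r : ℕ) (s : ℝ) : ℝ :=
  ∑ i ∈ Finset.range r, s ^ i / (Nat.factorial i : ℝ)

lemma qrR_succ (r : ℕ) (s : ℝ) : qrR (r + 1) s = qrR r s + s ^ r / r.factorial := by
  simp only [qrR, sum_range_succ]

lemma qrR_succ_zero (m : ℕ) : qrR (m + 1) 0 = 1 := by
  simp [qrR, sum_range_succ']

lemma one_le_qrR_succ (m : ℕ) {s : ℝ} (hs : 0 ≤ s) : 1 ≤ qrR (m + 1) s := by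
  rw [qrR, sum_range_succ']
  simp only [pow_zero, Nat.factorial_zero, Nat.cast_one, div_one, le_add_iff_nonneg_left]
  exact sum_nonneg fun i _ => by positivity

lemma hasDerivAt_pow_succ_div_factorial (n : ℕ) (t : ℝ) :
    HasDerivAt (fun u : ℝ => u ^ (n + 1) / (n + 1).factorial) (t ^ n / n.factorial) t := by
  refine ((hasDerivAt_pow (n + 1) t).div_const ((n + 1).factorial : ℝ)).congr_deriv ?_
  rw [Nat.factorial_succ, Nat.cast_mul, Nat.add_sub_cancel]
  field_simp

lemma hasDerivAt_qrR_succ (m : ℕ) (s : ℝ) : HasDerivAt (qrR (m + 1)) (qrR m s) s := by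
  have hq : qrR (m + 1) = fun u : ℝ => ∑ i ∈ range m, u ^ (i + 1) / (i + 1).factorial + 1 := by
    funext u
    simp [qrR, sum_range_succ']
  rw [hq]
  exact (HasDerivAt.fun_sum fun i _ => hasDerivAt_pow_succ_div_factorial i s).add_const 1

lemma monotoneOn_qrR_succ_mul_exp (m : ℕ) :
    MonotoneOn (fun t => qrR (m + 1) t * Real.exp (t ^ (m + 1) / (m + 1).factorial - t))
      (Set.Ici 0) := by
  have hderiv : ∀ t : ℝ, HasDerivAt
      (fun t => qrR (m + 1) t * Real.exp (t ^ (m + 1) / (m + 1).factorial - t))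
      (Real.exp (t ^ (m + 1) / (m + 1).factorial - t) *
        (t ^ m / m.factorial * (qrR (m + 1) t - 1))) t := by
    intro t
    refine ((hasDerivAt_qrR_succ m t).mul
      ((hasDerivAt_pow_succ_div_factorial m t).sub (hasDerivAt_id t)).exp).congr_deriv ?_
    simp only [Pi.sub_apply, id_eq, qrR_succ]
    ring
  refine monotoneOn_of_deriv_nonneg (convex_Ici 0)
    (fun t _ => (hderiv t).continuousAt.continuousWithinAt)
    (fun t _ => (hderiv t).differentiableAt.differentiableWithinAt) fun t ht => ?_
  rw [interior_Ici, Set.mem_Ioi] at ht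
  rw [(hderiv t).deriv]
  have hq := one_le_qrR_succ m ht.le
  positivity

lemma exp_neg_pow_div_factorial_le_qrR_mul_exp_neg (m : ℕ) {s : ℝ} (hs : 0 ≤ s) :
    Real.exp (-(s ^ (m + 1) / (m + 1).factorial)) ≤ qrR (m + 1) s * Real.exp (-s) := by
  set x := s ^ (m + 1) / (m + 1).factorial
  have h : 1 ≤ qrR (m + 1) s * Real.exp (x - s) := by
    simpa [qrR_succ_zero] using monotoneOn_qrR_succ_mul_exp m (Set.mem_Ici.2 le_rfl) hs hs
  calc Real.exp (-x) = 1 * Real.exp (-x) := (one_mul _).symm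
    _ ≤ qrR (m + 1) s * Real.exp (x - s) * Real.exp (-x) :=
        mul_le_mul_of_nonneg_right h (Real.exp_nonneg _)
    _ = qrR (m + 1) s * Real.exp (-s) := by
        rw [mul_assoc, ← Real.exp_add]; ring_nf

/-- For `s > 0` and `r ≥ 1`: `q_r(s) e^{-s} ≥ exp(-s^r/r!)`, i.e.
`-log(q_r(s) e^{-s}) ≤ s^r/r!`. -/
theorem qr_exp_lower_bound (r : ℕ) (hr : 1 ≤ r) (s : ℝ) (hs : 0 < s) :
    Real.exp (-(s ^ r / (Nat.factorial r : ℝ))) ≤ qrR r s * Real.exp (-s)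
    ∧ -Real.log (qrR r s * Real.exp (-s)) ≤ s ^ r / (Nat.factorial r : ℝ) := by
  obtain ⟨m, rfl⟩ := Nat.exists_eq_add_of_le' hr
  have h := exp_neg_pow_div_factorial_le_qrR_mul_exp_neg m hs.le
  refine ⟨h, ?_⟩
  rw [neg_le, Real.le_log_iff_exp_le ((Real.exp_pos _).trans_le h)]
  exact h
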